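/- arXiv:1902.05436 — 4 statements merged into one kernel-verified Lean document; each statement's English description precedes it below -/
import Mathlib

section
/- With the setup of the factCache transition: let F : ℤ → ℤ satisfy F n = 1 for n ≤ 1 and F n = n * F (n-1) for n > 1, and Inv (g, lastN) := g = -1 ∨ g = lastN * F (lastN - 1). If the pre-state (g, lastN) satisfies Inv, then the return value of factCache on input n (which is 1 if n ≤ 1; g if g ≠ -1 ∧ n = lastN; and n * F (n-1) otherwise) equals F n. -/
theorem stmt_3 (F : ℤ → ℤ)
    (hF1 : ∀ n : ℤ, n ≤ 1 → F n = 1)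
    (hF2 : ∀ n : ℤ, n > 1 → F n = n * F (n - 1))
    (g lastN n : ℤ)
    (hInv : g = -1 ∨ g = lastN * F (lastN - 1)) :
    (if n ≤ 1 then 1 else if g ≠ -1 ∧ n = lastN then g else n * F (n - 1)) = F n := by
  split_ifs with hn hcached
  · exact (hF1 n hn).symm
  · obtain ⟨hg, rfl⟩ := hcached
    rw [hInv.resolve_left hg, hF2 n (by omega)]
  · exact (hF2 n (by omega)).symm
end

section
/- Combining invariant preservation and the return-value condition: for the factCache transition system started at state (-1, 0), any finite sequence of calls with arbitrary integer inputs yields, for each call with input n, the return value F n, where F is the unique function with F n = 1 for n ≤ 1 and F n = n * F (n-1) for n > 1. In particular, two calls with the same input always return the same value, i.e., factCache is observationally pure. -/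
/-!
The cache is consistent whenever it is marked as filled, i.e. its value is `F` of its key. Consistency
holds initially (the marker `-1` says the cache is empty), every call preserves it because a
refill stores `n * F (n - 1) = F n` under the key `n`, and a call made from a consistent state
returns `F n`, whether it hits the cache or recomputes.
-/

/-- One step of the factCache transition (recursive call replaced by `F`):
returns the new state. -/
def factStep (F : ℤ → ℤ) (s : ℤ × ℤ) (n : ℤ) : ℤ × ℤ :=
  if n ≤ 1 then s
  else if s.1 ≠ -1 ∧ n = s.2 then s
  else (n * F (n - 1), n)

/-- Return value of factCache from state `s` on input `n`. -/
def factRet (F : ℤ → ℤ) (s : ℤ × ℤ) (n : ℤ) : ℤ :=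
  if n ≤ 1 then 1
  else if s.1 ≠ -1 ∧ n = s.2 then s.1
  else n * F (n - 1)

/-- Sequential execution of a list of calls, collecting the return values. -/
def factRun (F : ℤ → ℤ) : ℤ × ℤ → List ℤ → List ℤ
  | _, [] => []
  | s, n :: ns => factRet F s n :: factRun F (factStep F s n) ns

def CacheConsistent (F : ℤ → ℤ) (s : ℤ × ℤ) : Prop :=
  s.1 ≠ -1 → s.1 = F s.2

theorem cacheConsistent_init (F : ℤ → ℤ) : CacheConsistent F (-1, 0) :=
  fun h => absurd rfl h

theorem CacheConsistent.factStep {F : ℤ → ℤ} (hF2 : ∀ n : ℤ, n > 1 → F n = n * F (n - 1))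
    {s : ℤ × ℤ} (hs : CacheConsistent F s) (n : ℤ) : CacheConsistent F (factStep F s n) := by
  unfold _root_.factStep
  split_ifs with hn hhit
  · exact hs
  · exact hs
  · exact fun _ => (hF2 n (by omega)).symm

theorem CacheConsistent.factRet_eq {F : ℤ → ℤ} (hF1 : ∀ n : ℤ, n ≤ 1 → F n = 1)
    (hF2 : ∀ n : ℤ, n > 1 → F n = n * F (n - 1))
    {s : ℤ × ℤ} (hs : CacheConsistent F s) (n : ℤ) : factRet F s n = F n := by
  unfold factRet
  split_ifs with hn hhit
  · exact (hF1 n hn).symm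
  · rw [hs hhit.1, hhit.2]
  · exact (hF2 n (by omega)).symm

theorem CacheConsistent.factRun_eq_map {F : ℤ → ℤ} (hF1 : ∀ n : ℤ, n ≤ 1 → F n = 1)
    (hF2 : ∀ n : ℤ, n > 1 → F n = n * F (n - 1))
    {s : ℤ × ℤ} (hs : CacheConsistent F s) (ns : List ℤ) : factRun F s ns = ns.map F := by
  induction ns generalizing s with
  | nil => rfl
  | cons n ns ih =>
    rw [factRun, List.map_cons, hs.factRet_eq hF1 hF2, ih (hs.factStep hF2 n)]

theorem stmt_4 (F : ℤ → ℤ)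
    (hF1 : ∀ n : ℤ, n ≤ 1 → F n = 1)
    (hF2 : ∀ n : ℤ, n > 1 → F n = n * F (n - 1))
    (ns : List ℤ) :
    factRun F (-1, 0) ns = ns.map F :=
  (cacheConsistent_init F).factRun_eq_map hF1 hF2 ns
end

section
/- Let F : ℤ → ℤ satisfy the factorial equations. Consider the single-entry caching factorial with global variable nineteen : ℤ and invariant Inv nineteen := nineteen = -1 ∨ nineteen = 19 * F 18. Then Inv holds initially (nineteen = -1), is preserved by the procedure's transition (which sets nineteen to 19 * F 18 when called with n = 19 and nineteen = -1, and leaves it unchanged otherwise), and under Inv the return value of the procedure on any input n (1 if n ≤ 1; nineteen if n = 19 and nineteen ≠ -1; 19 * F 18 if n = 19 and nineteen = -1; n * F (n-1) otherwise) equals F n. -/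
/-!
The cache `nineteen` only ever holds the sentinel `-1` or the value `19 * F 18`, and the latter is
`F 19` by the recursion equation. Hence every branch of the cached procedure returns `F n`: the
cache hit returns `F 19`, the cache miss computes it, and the other branches are the equations.
-/

section FactSingle

variable (F : ℤ → ℤ)

def CacheInv (nineteen : ℤ) : Prop :=
  nineteen = -1 ∨ nineteen = 19 * F 18

def cacheUpdate (nineteen n : ℤ) : ℤ :=
  if n = 19 ∧ nineteen = -1 then 19 * F 18 else nineteen

def cachedFact (nineteen n : ℤ) : ℤ :=
  if n ≤ 1 then 1
  else if n = 19 ∧ nineteen ≠ -1 then nineteen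
  else if n = 19 ∧ nineteen = -1 then 19 * F 18
  else n * F (n - 1)

theorem cacheInv_sentinel : CacheInv F (-1) :=
  Or.inl rfl

theorem CacheInv.cacheUpdate {nineteen : ℤ} (h : CacheInv F nineteen) (n : ℤ) :
    CacheInv F (cacheUpdate F nineteen n) := by
  unfold _root_.cacheUpdate
  split_ifs
  · exact Or.inr rfl
  · exact h

variable {F}

theorem mul_eighteen_eq_nineteen (hF2 : ∀ n : ℤ, n > 1 → F n = n * F (n - 1)) :
    19 * F 18 = F 19 :=
  (hF2 19 (by norm_num)).symm

theorem CacheInv.eq_of_ne_sentinel (hF2 : ∀ n : ℤ, n > 1 → F n = n * F (n - 1))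
    {nineteen : ℤ} (h : CacheInv F nineteen) (hne : nineteen ≠ -1) : nineteen = F 19 :=
  (h.resolve_left hne).trans (mul_eighteen_eq_nineteen hF2)

theorem CacheInv.cachedFact_eq (hF1 : ∀ n : ℤ, n ≤ 1 → F n = 1)
    (hF2 : ∀ n : ℤ, n > 1 → F n = n * F (n - 1)) {nineteen : ℤ} (h : CacheInv F nineteen)
    (n : ℤ) : cachedFact F nineteen n = F n := by
  unfold cachedFact
  split_ifs with hn hhit hmiss
  · exact (hF1 n hn).symm
  · rw [hhit.1]
    exact h.eq_of_ne_sentinel hF2 hhit.2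
  · rw [hmiss.1]
    exact mul_eighteen_eq_nineteen hF2
  · exact (hF2 n (not_le.mp hn)).symm

end FactSingle

theorem stmt_9 (F : ℤ → ℤ)
    (hF1 : ∀ n : ℤ, n ≤ 1 → F n = 1)
    (hF2 : ∀ n : ℤ, n > 1 → F n = n * F (n - 1)) :
    (((-1 : ℤ) = -1 ∨ (-1 : ℤ) = 19 * F 18) ∧
     (∀ nineteen n : ℤ, (nineteen = -1 ∨ nineteen = 19 * F 18) →
        ((if n = 19 ∧ nineteen = -1 then 19 * F 18 else nineteen) = -1 ∨
         (if n = 19 ∧ nineteen = -1 then 19 * F 18 else nineteen) = 19 * F 18)) ∧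
     (∀ nineteen n : ℤ, (nineteen = -1 ∨ nineteen = 19 * F 18) →
        (if n ≤ 1 then 1
         else if n = 19 ∧ nineteen ≠ -1 then nineteen
         else if n = 19 ∧ nineteen = -1 then 19 * F 18
         else n * F (n - 1)) = F n)) :=
  ⟨cacheInv_sentinel F,
    fun _ n h => CacheInv.cacheUpdate F h n,
    fun _ n h => CacheInv.cachedFact_eq hF1 hF2 h n⟩
end

section
/- Fold-based purity of the memoizing Fibonacci library: starting from the all-zero cache and processing any list of inputs ns : List ℤ by the memoized Fibonacci transition (which returns Fib n and updates the cache at entries as described), the list of outputs equals ns.map Fib; in particular the output for a given input does not depend on its position in the list or on the other inputs. -/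
/-- One step of the memoized Fibonacci transition: new cache. -/
def fibStep (Fib : ℤ → ℤ) (c : ℤ → ℤ) (n : ℤ) : ℤ → ℤ :=
  if n ≤ 2 then c
  else if c n ≠ 0 then c
  else Function.update c n (Fib (n - 1) + Fib (n - 2))

/-- Return value of memoized Fibonacci from cache `c` on input `n`. -/
def fibRet (Fib : ℤ → ℤ) (c : ℤ → ℤ) (n : ℤ) : ℤ :=
  if n ≤ 2 then 1
  else if c n ≠ 0 then c n
  else Fib (n - 1) + Fib (n - 2)

/-- Sequential execution collecting outputs. -/
def fibRun (Fib : ℤ → ℤ) : (ℤ → ℤ) → List ℤ → List ℤ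
  | _, [] => []
  | c, n :: ns => fibRet Fib c n :: fibRun Fib (fibStep Fib c n) ns

/-! Every entry of the cache is either unset (`0`) or already correct, and each step of the
transition preserves this. While it holds, a nonzero entry is the right answer and a zero entry
sends the computation to the recurrence, so every output is correct. -/

def CacheSound (Fib c : ℤ → ℤ) : Prop :=
  ∀ k, c k = 0 ∨ c k = Fib k

section

variable {Fib c : ℤ → ℤ}

theorem cacheSound_zero : CacheSound Fib fun _ => 0 :=
  fun _ => Or.inl rfl

theorem CacheSound.fibStep (hFib2 : ∀ n : ℤ, n > 2 → Fib n = Fib (n - 1) + Fib (n - 2))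
    (hc : CacheSound Fib c) (n : ℤ) : CacheSound Fib (fibStep Fib c n) := by
  intro k
  unfold _root_.fibStep
  split_ifs with hn hcn
  · exact hc k
  · exact hc k
  · rcases eq_or_ne k n with rfl | hkn
    · exact Or.inr (by rw [Function.update_self, hFib2 k (by omega)])
    · simpa only [Function.update_of_ne hkn] using hc k

theorem fibRet_eq_of_cacheSound (hFib1 : ∀ n : ℤ, n ≤ 2 → Fib n = 1)
    (hFib2 : ∀ n : ℤ, n > 2 → Fib n = Fib (n - 1) + Fib (n - 2))
    (hc : CacheSound Fib c) (n : ℤ) : fibRet Fib c n = Fib n := by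
  unfold fibRet
  split_ifs with hn hcn
  · exact (hFib1 n hn).symm
  · exact (hc n).resolve_left hcn
  · exact (hFib2 n (by omega)).symm

theorem fibRun_eq_map_of_cacheSound (hFib1 : ∀ n : ℤ, n ≤ 2 → Fib n = 1)
    (hFib2 : ∀ n : ℤ, n > 2 → Fib n = Fib (n - 1) + Fib (n - 2))
    (ns : List ℤ) (hc : CacheSound Fib c) : fibRun Fib c ns = ns.map Fib := by
  induction ns generalizing c with
  | nil => rfl
  | cons n ns ih =>
    rw [fibRun, List.map_cons, fibRet_eq_of_cacheSound hFib1 hFib2 hc n,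
      ih (hc.fibStep hFib2 n)]

end

theorem stmt_18 (Fib : ℤ → ℤ)
    (hFib1 : ∀ n : ℤ, n ≤ 2 → Fib n = 1)
    (hFib2 : ∀ n : ℤ, n > 2 → Fib n = Fib (n - 1) + Fib (n - 2))
    (ns : List ℤ) :
    fibRun Fib (fun _ => 0) ns = ns.map Fib :=
  fibRun_eq_map_of_cacheSound hFib1 hFib2 ns cacheSound_zero
end
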